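/- Let n ≥ 2 and let M = [m_{ij}] be an n×n real B-Nekrasov matrix with decomposition M = B⁺ + C, and let D = diag(d_1,…,d_n) with 0 ≤ d_i ≤ 1 for all i. Then the matrices I − D + DM and I − D + DB⁺ are invertible and ‖(I − D + DM)^{-1}‖_∞ ≤ (n − 1) ‖(I − D + DB⁺)^{-1}‖_∞. -/

import Mathlib

open Finset

noncomputable def nekH {n : ℕ} {𝕜 : Type*} [RCLike 𝕜] (A : Matrix (Fin n) (Fin n) 𝕜) : Fin n → ℝ
  | i =>
    (∑ j : Fin n, if h : j < i then ‖A i j‖ / ‖A j j‖ * nekH A j else 0)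
      + ∑ j : Fin n, if i < j then ‖A i j‖ else 0
termination_by i => i.val
decreasing_by exact h

def IsNekrasov {n : ℕ} {𝕜 : Type*} [RCLike 𝕜] (A : Matrix (Fin n) (Fin n) 𝕜) : Prop :=
  ∀ i, nekH A i < ‖A i i‖

noncomputable def nekZ {n : ℕ} {𝕜 : Type*} [RCLike 𝕜] (A : Matrix (Fin n) (Fin n) 𝕜) : Fin n → ℝ
  | i => (∑ j : Fin n, if h : j < i then ‖A i j‖ / ‖A j j‖ * nekZ A j else 0) + 1
termination_by i => i.val
decreasing_by exact h

noncomputable def nekEta {n : ℕ} {𝕜 : Type*} [RCLike 𝕜] (M : Matrix (Fin n) (Fin n) 𝕜) : Fin n → ℝ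
  | i => (∑ j : Fin n, if h : j < i then ‖M i j‖ / min ‖M j j‖ 1 * nekEta M j else 0) + 1
termination_by i => i.val
decreasing_by exact h

noncomputable def linftyNorm {n : ℕ} {𝕜 : Type*} [RCLike 𝕜] (A : Matrix (Fin n) (Fin n) 𝕜) : ℝ :=
  ⨆ i, ∑ j, ‖A i j‖

noncomputable def rPlus {n : ℕ} (M : Matrix (Fin n) (Fin n) ℝ) (i : Fin n) : ℝ :=
  Finset.fold max 0 (fun j => M i j) (Finset.univ.erase i)

noncomputable def BPlus {n : ℕ} (M : Matrix (Fin n) (Fin n) ℝ) : Matrix (Fin n) (Fin n) ℝ :=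
  Matrix.of fun i j => M i j - rPlus M i

def IsBNekrasov {n : ℕ} (M : Matrix (Fin n) (Fin n) ℝ) : Prop :=
  IsNekrasov (BPlus M) ∧ ∀ i, 0 < BPlus M i i

def IsLCPSolution {n : ℕ} (M : Matrix (Fin n) (Fin n) ℝ) (q x : Fin n → ℝ) : Prop :=
  (∀ i, 0 ≤ x i) ∧ (∀ i, 0 ≤ (M.mulVec x + q) i) ∧ ∑ i, (M.mulVec x + q) i * x i = 0

def IsPMatrix {n : ℕ} (M : Matrix (Fin n) (Fin n) ℝ) : Prop :=
  ∀ S : Finset (Fin n), 0 < (M.submatrix (fun i : S => (i : Fin n)) (fun j : S => (j : Fin n))).det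



/-!
Let `A = I - D + D B⁺`. Like `B⁺`, it is a Nekrasov Z-matrix with positive diagonal, and the
Nekrasov recursion produces a vector `w > 0` with `A w > 0`; by the minimum principle `A` is then
invertible and monotone (`A x ≥ 0 → x ≥ 0`). Since `M = B⁺ + r⁺ 1ᵀ`, we get
`I - D + D M = A + c 1ᵀ = A (I + u 1ᵀ)` with `c = D r⁺ ≥ 0` and `u = A⁻¹ c ≥ 0`. The second factor
has inverse `I - u 1ᵀ / (1 + 1ᵀ u)`, whose row sums are `1 + (n - 2) u_i / (1 + 1ᵀ u) ≤ n - 1`.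
-/

open Matrix
open scoped Matrix.Norms.Operator

section Nekrasov

variable {n : ℕ} {𝕜 : Type*} [RCLike 𝕜] (A : Matrix (Fin n) (Fin n) 𝕜)

lemma nekH_nonneg (i : Fin n) : 0 ≤ nekH A i := by
  induction i using WellFoundedLT.induction with
  | _ i ih =>
    rw [nekH]
    refine add_nonneg (sum_nonneg fun j _ => ?_) (sum_nonneg fun j _ => ?_) <;> split
    · exact mul_nonneg (by positivity) (ih j ‹_›)
    all_goals positivity

lemma one_le_nekZ (i : Fin n) : 1 ≤ nekZ A i := by
  induction i using WellFoundedLT.induction with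
  | _ i ih =>
    rw [nekZ, le_add_iff_nonneg_left]
    refine sum_nonneg fun j _ => ?_
    split
    · exact mul_nonneg (by positivity) (zero_le_one.trans (ih j ‹_›))
    · rfl

lemma sum_erase_eq_sum_lt_add_sum_gt {α M : Type*} [Fintype α] [LinearOrder α] [AddCommMonoid M]
    (f : α → M) (i : α) :
    ∑ j ∈ univ.erase i, f j
      = (∑ j, if j < i then f j else 0) + ∑ j, if i < j then f j else 0 := by
  rw [← sum_add_distrib, ← sum_erase_add _ _ (mem_univ i)]
  simp only [lt_self_iff_false, if_false, add_zero]
  refine sum_congr rfl fun j hj => ?_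
  rcases lt_or_gt_of_ne (ne_of_mem_erase hj) with h | h
  · simp [h, h.not_gt]
  · simp [h, h.not_gt]

/-- The scaling `w i = (h_i + ε z_i) / |a_ii|` turns a Nekrasov matrix into a strictly diagonally
dominant one: for `j < i` the weights reproduce the recursion defining `h_i` and `z_i`, and for
`j > i` one only uses `w j ≤ 1`. -/
theorem IsNekrasov.exists_pos_weight (hA : IsNekrasov A) :
    ∃ w : Fin n → ℝ, (∀ i, 0 < w i) ∧
      ∀ i, ∑ j ∈ univ.erase i, ‖A i j‖ * w j < ‖A i i‖ * w i := by
  rcases isEmpty_or_nonempty (Fin n) with _ | _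
  · exact ⟨0, isEmptyElim, isEmptyElim⟩
  have hdiag i : 0 < ‖A i i‖ := (nekH_nonneg A i).trans_lt (hA i)
  obtain ⟨i₀, hi₀⟩ := Finite.exists_min fun i => (‖A i i‖ - nekH A i) / nekZ A i
  set ε := (‖A i₀ i₀‖ - nekH A i₀) / nekZ A i₀
  have hε : 0 < ε := div_pos (sub_pos.2 (hA i₀)) (zero_lt_one.trans_le (one_le_nekZ A i₀))
  have hεle i : nekH A i + ε * nekZ A i ≤ ‖A i i‖ := by
    have := (le_div_iff₀ (zero_lt_one.trans_le (one_le_nekZ A i))).1 (hi₀ i)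
    linarith
  set w := fun i => (nekH A i + ε * nekZ A i) / ‖A i i‖
  have hw_le i : w i ≤ 1 := (div_le_one (hdiag i)).2 (hεle i)
  have hdiag_w i : ‖A i i‖ * w i = nekH A i + ε * nekZ A i := mul_div_cancel₀ _ (hdiag i).ne'
  refine ⟨w, fun i => div_pos ?_ (hdiag i), fun i => ?_⟩
  · nlinarith [nekH_nonneg A i, one_le_nekZ A i]
  have hlt : (∑ j, if j < i then ‖A i j‖ * w j else 0)
      = (∑ j, if _ : j < i then ‖A i j‖ / ‖A j j‖ * nekH A j else 0)
        + ε * ∑ j, if _ : j < i then ‖A i j‖ / ‖A j j‖ * nekZ A j else 0 := by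
    rw [mul_sum, ← sum_add_distrib]
    refine sum_congr rfl fun j _ => ?_
    split
    · simp only [w]
      ring
    · simp only [mul_zero, add_zero]
  have hgt : (∑ j, if i < j then ‖A i j‖ * w j else 0) ≤ ∑ j, if i < j then ‖A i j‖ else 0 :=
    sum_le_sum fun j _ => by
      split
      · exact mul_le_of_le_one_right (norm_nonneg _) (hw_le j)
      · rfl
  have hnekH := nekH.eq_1 A i
  have hnekZ := nekZ.eq_1 A i
  rw [sum_erase_eq_sum_lt_add_sum_gt, hlt, hdiag_w]
  nlinarith

end Nekrasov

section ZMatrix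

variable {ι : Type*} [Fintype ι] {A : Matrix ι ι ℝ}

/-- Minimum principle: at an index `i₀` minimising `x k / w k`, the sign pattern of `A` gives
`(A *ᵥ x) i₀ ≤ (x i₀ / w i₀) * (A *ᵥ w) i₀`, which is negative as soon as some `x k < 0`. -/
theorem nonneg_of_mulVec_nonneg (hZ : ∀ i j, i ≠ j → A i j ≤ 0) {w : ι → ℝ}
    (hw : ∀ i, 0 < w i) (hAw : ∀ i, 0 < (A *ᵥ w) i) {x : ι → ℝ} (hx : ∀ i, 0 ≤ (A *ᵥ x) i)
    (i : ι) : 0 ≤ x i := by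
  have : Nonempty ι := ⟨i⟩
  obtain ⟨i₀, hi₀⟩ := Finite.exists_min fun k => x k / w k
  by_contra! hneg
  set m := x i₀ / w i₀
  have hm : m < 0 := (hi₀ i).trans_lt (div_neg_of_neg_of_pos hneg (hw i))
  have hmx k : m * w k ≤ x k := (le_div_iff₀ (hw k)).1 (hi₀ k)
  have : (A *ᵥ x) i₀ ≤ m * (A *ᵥ w) i₀ := by
    simp only [mulVec, dotProduct, mul_sum]
    refine sum_le_sum fun k _ => ?_
    obtain rfl | hk := eq_or_ne k i₀
    · rw [← mul_assoc, mul_comm _ (A k k), mul_assoc, div_mul_cancel₀ _ (hw k).ne']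
    · nlinarith [hZ i₀ k hk.symm, hmx k]
  nlinarith [hx i₀, hAw i₀]

theorem isUnit_det_of_pos_mulVec_pos [DecidableEq ι] (hZ : ∀ i j, i ≠ j → A i j ≤ 0)
    {w : ι → ℝ} (hw : ∀ i, 0 < w i) (hAw : ∀ i, 0 < (A *ᵥ w) i) : IsUnit A.det := by
  refine isUnit_iff_ne_zero.2 fun h => ?_
  obtain ⟨v, hv, hAv⟩ := exists_mulVec_eq_zero_iff.2 h
  refine hv (funext fun i => le_antisymm ?_ (nonneg_of_mulVec_nonneg hZ hw hAw (by simp [hAv]) i))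
  simpa using nonneg_of_mulVec_nonneg hZ hw hAw (x := -v) (by simp [mulVec_neg, hAv]) i

end ZMatrix

theorem IsNekrasov.exists_pos_mulVec_pos {n : ℕ} {A : Matrix (Fin n) (Fin n) ℝ}
    (hA : IsNekrasov A) (hdiag : ∀ i, 0 < A i i) (hZ : ∀ i j, i ≠ j → A i j ≤ 0) :
    ∃ w : Fin n → ℝ, (∀ i, 0 < w i) ∧ ∀ i, 0 < (A *ᵥ w) i := by
  obtain ⟨w, hw, hdom⟩ := hA.exists_pos_weight
  refine ⟨w, hw, fun i => ?_⟩
  have hoff : ∑ j ∈ univ.erase i, A i j * w j = -∑ j ∈ univ.erase i, ‖A i j‖ * w j := by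
    rw [← sum_neg_distrib]
    refine sum_congr rfl fun j hj => ?_
    rw [Real.norm_of_nonpos (hZ i j (ne_of_mem_erase hj).symm), neg_mul, neg_neg]
  have := hdom i
  rw [Real.norm_of_nonneg (hdiag i).le] at this
  rw [mulVec, dotProduct, ← add_sum_erase _ _ (mem_univ i), hoff]
  linarith

section LCPMatrix

variable {n : ℕ} (d : Fin n → ℝ) (B : Matrix (Fin n) (Fin n) ℝ)

-- Named after the error bounds for linear complementarity problems, where this matrix arises.
def lcpMatrix : Matrix (Fin n) (Fin n) ℝ := 1 - diagonal d + diagonal d * B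

lemma lcpMatrix_apply_self (i : Fin n) : lcpMatrix d B i i = 1 - d i + d i * B i i := by
  simp [lcpMatrix, diagonal_mul]

lemma lcpMatrix_apply_of_ne {i j : Fin n} (hij : i ≠ j) : lcpMatrix d B i j = d i * B i j := by
  simp [lcpMatrix, diagonal_mul, one_apply_ne hij, diagonal_apply_ne _ hij]

variable {d B}

lemma lcpMatrix_apply_nonpos (hd : ∀ i, 0 ≤ d i) (hB : ∀ i j, i ≠ j → B i j ≤ 0) {i j : Fin n}
    (hij : i ≠ j) : lcpMatrix d B i j ≤ 0 := by
  rw [lcpMatrix_apply_of_ne d B hij]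
  exact mul_nonpos_of_nonneg_of_nonpos (hd i) (hB i j hij)

lemma le_lcpMatrix_apply_self (hd : ∀ i, d i ≤ 1) (i : Fin n) :
    d i * B i i ≤ lcpMatrix d B i i := by
  rw [lcpMatrix_apply_self]
  linarith [hd i]

lemma lcpMatrix_apply_self_pos (hd : ∀ i, 0 ≤ d i ∧ d i ≤ 1) (hBd : ∀ i, 0 < B i i) (i : Fin n) :
    0 < lcpMatrix d B i i := by
  rw [lcpMatrix_apply_self]
  rcases (hd i).2.eq_or_lt with h | h
  · simpa [h] using hBd i
  · nlinarith [(hd i).1, hBd i]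

lemma nekH_lcpMatrix_le (hd : ∀ i, 0 ≤ d i ∧ d i ≤ 1) (hBd : ∀ i, 0 < B i i) (i : Fin n) :
    nekH (lcpMatrix d B) i ≤ d i * nekH B i := by
  induction i using WellFoundedLT.induction with
  | _ i ih =>
    rw [nekH.eq_1, nekH.eq_1 B i, mul_add, mul_sum, mul_sum]
    refine add_le_add (sum_le_sum fun j _ => ?_) (sum_le_sum fun j _ => ?_)
    · split_ifs with hj
      · have hratio : nekH (lcpMatrix d B) j / lcpMatrix d B j j ≤ nekH B j / B j j := by
          rw [div_le_div_iff₀ (lcpMatrix_apply_self_pos hd hBd j) (hBd j)]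
          nlinarith [ih j hj, le_lcpMatrix_apply_self (B := B) (fun i => (hd i).2) j,
            nekH_nonneg B j, hBd j]
        rw [lcpMatrix_apply_of_ne d B hj.ne', norm_mul, Real.norm_of_nonneg (hd i).1,
          Real.norm_of_nonneg (lcpMatrix_apply_self_pos hd hBd j).le,
          Real.norm_of_nonneg (hBd j).le]
        calc _ = d i * (‖B i j‖ * (nekH (lcpMatrix d B) j / lcpMatrix d B j j)) := by ring
          _ ≤ d i * (‖B i j‖ * (nekH B j / B j j)) := by have := (hd i).1; gcongr
          _ = _ := by ring
      · simp
    · split_ifs with hj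
      · rw [lcpMatrix_apply_of_ne d B hj.ne, norm_mul, Real.norm_of_nonneg (hd i).1]
      · simp

/-- `I - D + D B` is Nekrasov because `|a_ii| - h_i(I - D + D B) ≥ (1 - d_i) + d_i (b_ii - h_i(B))`
is a convex combination of positive numbers. -/
theorem IsNekrasov.lcpMatrix (hB : IsNekrasov B) (hd : ∀ i, 0 ≤ d i ∧ d i ≤ 1)
    (hBd : ∀ i, 0 < B i i) : IsNekrasov (lcpMatrix d B) := by
  intro i
  have hBi := hB i
  rw [Real.norm_of_nonneg (hBd i).le] at hBi
  rw [Real.norm_of_nonneg (lcpMatrix_apply_self_pos hd hBd i).le, lcpMatrix_apply_self]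
  have := nekH_lcpMatrix_le hd hBd i
  rcases (hd i).2.eq_or_lt with h | h
  · rw [h] at this ⊢
    linarith
  · nlinarith [(hd i).1, nekH_nonneg B i]

end LCPMatrix

section RankOneUpdate

variable {ι : Type*} [Fintype ι]

theorem linfty_opNorm_eq_iSup {κ α : Type*} [Fintype κ] [SeminormedAddCommGroup α]
    (A : Matrix ι κ α) : ‖A‖ = ⨆ i, ∑ j, ‖A i j‖ := by
  rw [linfty_opNorm_def, sup_univ_eq_ciSup, NNReal.coe_iSup]
  simp [NNReal.coe_sum]

variable [DecidableEq ι]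

theorem one_add_vecMulVec_mul_one_sub {K : Type*} [Field K] (u : ι → K)
    (h : 1 + ∑ i, u i ≠ 0) :
    (1 + vecMulVec u 1 : Matrix ι ι K) * (1 - (1 + ∑ i, u i)⁻¹ • vecMulVec u 1 : Matrix ι ι K)
      = 1 := by
  have hsq : vecMulVec u 1 * vecMulVec u 1 = (∑ i, u i) • vecMulVec u (1 : ι → K) := by
    rw [vecMulVec_mul_vecMulVec, one_dotProduct]
    ext i j
    simp [vecMulVec_apply, mul_comm]
  rw [mul_sub, add_mul, add_mul, mul_smul_comm, mul_smul_comm, hsq, smul_smul]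
  simp only [one_mul, mul_one]
  match_scalars <;> field_simp
  ring

theorem norm_one_sub_smul_vecMulVec_le (hι : 2 ≤ Fintype.card ι) {u : ι → ℝ}
    (hu : ∀ i, 0 ≤ u i) :
    ‖1 - (1 + ∑ i, u i)⁻¹ • vecMulVec u (1 : ι → ℝ)‖ ≤ Fintype.card ι - 1 := by
  have hcard : (2 : ℝ) ≤ Fintype.card ι := by exact_mod_cast hι
  rw [linfty_opNorm_eq_iSup]
  refine Real.iSup_le (fun i => ?_) (by linarith)
  have hs : 0 < 1 + ∑ j, u j := by linarith [sum_nonneg fun j (_ : j ∈ univ) => hu j]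
  set t := (1 + ∑ i, u i)⁻¹
  have ht : 0 ≤ t := inv_nonneg.2 hs.le
  have htu : t * u i ≤ 1 := by
    rw [inv_mul_le_one₀ hs]
    linarith [single_le_sum (fun j _ => hu j) (mem_univ i)]
  have hoff : ∑ j ∈ univ.erase i, ‖(1 - t • vecMulVec u 1 : Matrix ι ι ℝ) i j‖
      = (Fintype.card ι - 1) * (t * u i) := by
    rw [sum_congr rfl fun j hj => by
      rw [Matrix.sub_apply, one_apply_ne (ne_of_mem_erase hj).symm, Matrix.smul_apply,
        vecMulVec_apply, Pi.one_apply, mul_one, zero_sub, norm_neg, smul_eq_mul,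
        Real.norm_of_nonneg (mul_nonneg ht (hu i))]]
    rw [sum_const, card_erase_of_mem (mem_univ i), card_univ, nsmul_eq_mul,
      Nat.cast_sub (by omega), Nat.cast_one]
  rw [← add_sum_erase _ _ (mem_univ i), hoff, Matrix.sub_apply, one_apply_eq, Matrix.smul_apply,
    vecMulVec_apply, Pi.one_apply, mul_one, smul_eq_mul, Real.norm_of_nonneg (by linarith)]
  nlinarith [mul_nonneg ht (hu i)]

theorem isUnit_det_add_vecMulVec_one_and_norm_inv_le (hι : 2 ≤ Fintype.card ι)
    {A : Matrix ι ι ℝ} (hA : IsUnit A.det) {c : ι → ℝ} (hc : ∀ i, 0 ≤ (A⁻¹ *ᵥ c) i) :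
    IsUnit (A + vecMulVec c 1).det ∧
      ‖(A + vecMulVec c 1)⁻¹‖ ≤ (Fintype.card ι - 1) * ‖A⁻¹‖ := by
  set u := A⁻¹ *ᵥ c
  set P := 1 - (1 + ∑ i, u i)⁻¹ • vecMulVec u (1 : ι → ℝ)
  have hs : 1 + ∑ i, u i ≠ 0 :=
    (add_pos_of_pos_of_nonneg one_pos (sum_nonneg fun i _ => hc i)).ne'
  have hfactor : A + vecMulVec c 1 = A * (1 + vecMulVec u 1) := by
    rw [mul_add, mul_one, mul_vecMulVec, mulVec_mulVec, mul_nonsing_inv _ hA, one_mulVec]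
  have hright : (A + vecMulVec c 1) * (P * A⁻¹) = 1 := by
    rw [hfactor, mul_assoc, ← mul_assoc _ P, one_add_vecMulVec_mul_one_sub u hs, one_mul,
      mul_nonsing_inv _ hA]
  refine ⟨isUnit_det_of_right_inverse hright, ?_⟩
  rw [inv_eq_right_inv hright]
  calc ‖P * A⁻¹‖ ≤ ‖P‖ * ‖A⁻¹‖ := linfty_opNorm_mul _ _
    _ ≤ _ := by gcongr; exact norm_one_sub_smul_vecMulVec_le hι hc

end RankOneUpdate

section BPlus

variable {n : ℕ} (M : Matrix (Fin n) (Fin n) ℝ)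

lemma rPlus_nonneg (i : Fin n) : 0 ≤ rPlus M i :=
  (le_fold_max _).2 (Or.inl le_rfl)

lemma le_rPlus {i j : Fin n} (hij : j ≠ i) : M i j ≤ rPlus M i :=
  (le_fold_max _).2 (Or.inr ⟨j, mem_erase.2 ⟨hij, mem_univ j⟩, le_rfl⟩)

lemma BPlus_apply_nonpos {i j : Fin n} (hij : i ≠ j) : BPlus M i j ≤ 0 :=
  sub_nonpos.2 (le_rPlus M hij.symm)

lemma lcpMatrix_eq_lcpMatrix_BPlus_add (d : Fin n → ℝ) :
    lcpMatrix d M = lcpMatrix d (BPlus M) + vecMulVec (d * rPlus M) 1 := by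
  ext i j
  simp only [lcpMatrix, BPlus, Matrix.add_apply, Matrix.sub_apply, diagonal_mul, vecMulVec_apply,
    of_apply, Pi.mul_apply, Pi.one_apply]
  ring

end BPlus

theorem stmt11 {n : ℕ} (hn : 2 ≤ n) (M : Matrix (Fin n) (Fin n) ℝ)
    (hBN : IsBNekrasov M)
    (d : Fin n → ℝ) (hd : ∀ i, 0 ≤ d i ∧ d i ≤ 1) :
    IsUnit (1 - Matrix.diagonal d + Matrix.diagonal d * M).det ∧
      IsUnit (1 - Matrix.diagonal d + Matrix.diagonal d * BPlus M).det ∧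
      linftyNorm (1 - Matrix.diagonal d + Matrix.diagonal d * M)⁻¹ ≤
        (n - 1 : ℝ) * linftyNorm (1 - Matrix.diagonal d + Matrix.diagonal d * BPlus M)⁻¹ := by
  obtain ⟨hB, hBd⟩ := hBN
  set A := lcpMatrix d (BPlus M)
  have hAZ : ∀ i j, i ≠ j → A i j ≤ 0 := fun _ _ =>
    lcpMatrix_apply_nonpos (fun i => (hd i).1) fun _ _ => BPlus_apply_nonpos M
  obtain ⟨w, hw, hAw⟩ :=
    (hB.lcpMatrix hd hBd).exists_pos_mulVec_pos (lcpMatrix_apply_self_pos hd hBd) hAZ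
  have hA : IsUnit A.det := isUnit_det_of_pos_mulVec_pos hAZ hw hAw
  have hu : ∀ i, 0 ≤ (A⁻¹ *ᵥ (d * rPlus M)) i := by
    refine nonneg_of_mulVec_nonneg hAZ hw hAw fun i => ?_
    rw [mulVec_mulVec, mul_nonsing_inv _ hA, one_mulVec]
    exact mul_nonneg (hd i).1 (rPlus_nonneg M i)
  obtain ⟨hT, hTnorm⟩ :=
    isUnit_det_add_vecMulVec_one_and_norm_inv_le (by simpa using hn) hA hu
  change IsUnit (lcpMatrix d M).det ∧ IsUnit A.det ∧
    linftyNorm (lcpMatrix d M)⁻¹ ≤ (n - 1 : ℝ) * linftyNorm A⁻¹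
  rw [lcpMatrix_eq_lcpMatrix_BPlus_add]
  simp only [linftyNorm, ← linfty_opNorm_eq_iSup]
  exact ⟨hT, hA, by simpa using hTnorm⟩
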